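/- arXiv:2310.17338 — 7 statements merged into one kernel-verified Lean document; each statement's English description precedes it below -/
import Mathlib

section
/- For f(x) = λ‖x‖₁ + (1/2)‖x‖₂² with λ ≥ 0, the Fenchel conjugate is f*(x*) = (1/2)‖S_λ(x*)‖₂², where S_λ is the componentwise soft shrinkage operator. -/
lemma softShrink_sq' (lam a : ℝ) (hlam : 0 ≤ lam) :
    (max (|a| - lam) 0 * Real.sign a) ^ 2 = (max (|a| - lam) 0) ^ 2 := by
  rcases lt_trichotomy a 0 with h | h | h
  · rw [Real.sign_of_neg h]; ring
  · subst h; simp [hlam]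
  · rw [Real.sign_of_pos h]; ring

lemma scalar_le (lam a t : ℝ) (hlam : 0 ≤ lam) :
    a * t - lam * |t| - t ^ 2 / 2 ≤ (1 / 2) * (max (|a| - lam) 0 * Real.sign a) ^ 2 := by
  rw [softShrink_sq' lam a hlam]
  have h1 : a * t ≤ |a| * |t| := by
    calc a * t ≤ |a * t| := le_abs_self _
    _ = |a| * |t| := abs_mul a t
  have h2 : max (|a| - lam) 0 ≥ |a| - lam := le_max_left _ _
  have h3 : (0:ℝ) ≤ max (|a| - lam) 0 := le_max_right _ _
  have h4 : (0:ℝ) ≤ |t| := abs_nonneg t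
  have h5 : t ^ 2 = |t| ^ 2 := (sq_abs t).symm
  nlinarith [sq_nonneg (max (|a| - lam) 0 - |t|)]

lemma scalar_eq (lam a : ℝ) (hlam : 0 ≤ lam) :
    a * (max (|a| - lam) 0 * Real.sign a) - lam * |max (|a| - lam) 0 * Real.sign a|
      - (max (|a| - lam) 0 * Real.sign a) ^ 2 / 2
      = (1 / 2) * (max (|a| - lam) 0 * Real.sign a) ^ 2 := by
  rcases lt_trichotomy a 0 with h | h | h
  · rw [Real.sign_of_neg h]
    rcases le_or_gt (|a| - lam) 0 with h0 | h0
    · rw [max_eq_right h0]; ring_nf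
    · rw [max_eq_left h0.le, abs_of_neg h] at *
      rw [abs_of_nonpos (by nlinarith)]
      ring_nf
  · subst h; simp [hlam]
  · rw [Real.sign_of_pos h]
    rcases le_or_gt (|a| - lam) 0 with h0 | h0
    · rw [max_eq_right h0]; ring_nf
    · rw [max_eq_left h0.le, abs_of_pos h] at *
      rw [abs_of_nonneg (by nlinarith)]
      ring_nf

/-- The scalar soft shrinkage operator `S_λ(t) = max(|t| - λ, 0) · sign t`. -/
noncomputable def softShrink (lam t : ℝ) : ℝ :=
  max (|t| - lam) 0 * Real.sign t

/-- For `f(x) = λ‖x‖₁ + (1/2)‖x‖₂²` with `λ ≥ 0`, the Fenchel conjugate is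
`f*(xs) = (1/2)‖S_λ(xs)‖₂²`. -/
theorem fenchel_conjugate_l1_sq {n : ℕ} (lam : ℝ) (hlam : 0 ≤ lam)
    (f : EuclideanSpace ℝ (Fin n) → ℝ)
    (hf : ∀ x, f x = lam * ∑ i, |x i| + (1 / 2) * ‖x‖ ^ 2) :
    ∀ xs : EuclideanSpace ℝ (Fin n),
      sSup {r : ℝ | ∃ y, r = (inner ℝ xs y : ℝ) - f y} =
        (1 / 2) * ∑ i, (softShrink lam (xs i)) ^ 2 := by
  intro xs
  have hrw : ∀ y : EuclideanSpace ℝ (Fin n),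
      (inner ℝ xs y : ℝ) - f y = ∑ i, (xs i * y i - lam * |y i| - (y i) ^ 2 / 2) := by
    intro y
    rw [hf]
    have hinner : (inner ℝ xs y : ℝ) = ∑ i, xs i * y i := by
      simp [PiLp.inner_apply, RCLike.inner_apply, mul_comm]
    have hnorm : ‖y‖ ^ 2 = ∑ i, (y i) ^ 2 := by
      rw [EuclideanSpace.norm_eq, Real.sq_sqrt (by positivity)]
      simp [Real.norm_eq_abs, sq_abs]
    rw [hinner, hnorm, Finset.mul_sum, Finset.mul_sum, ← Finset.sum_add_distrib,
      ← Finset.sum_sub_distrib]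
    apply Finset.sum_congr rfl
    intro i _
    ring
  have hRHS : (1 / 2) * ∑ i, (softShrink lam (xs i)) ^ 2
      = ∑ i, (1 / 2) * (softShrink lam (xs i)) ^ 2 := Finset.mul_sum _ _ _
  have hub : ∀ r ∈ {r : ℝ | ∃ y, r = (inner ℝ xs y : ℝ) - f y},
      r ≤ (1 / 2) * ∑ i, (softShrink lam (xs i)) ^ 2 := by
    rintro r ⟨y, rfl⟩
    rw [hrw, hRHS]
    exact Finset.sum_le_sum fun i _ => scalar_le lam (xs i) (y i) hlam
  have hmem : (1 / 2) * ∑ i, (softShrink lam (xs i)) ^ 2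
      ∈ {r : ℝ | ∃ y, r = (inner ℝ xs y : ℝ) - f y} := by
    refine ⟨(WithLp.equiv 2 (Fin n → ℝ)).symm (fun i => softShrink lam (xs i)), ?_⟩
    rw [hrw, hRHS]
    apply Finset.sum_congr rfl
    intro i _
    simpa [softShrink] using (scalar_eq lam (xs i) hlam).symm
  refine le_antisymm (csSup_le ⟨_, hmem⟩ hub) (le_csSup ⟨_, hub⟩ hmem)
end

section
/- If f : ℝ^n → ℝ is σ-strongly convex, then its Fenchel conjugate f* is differentiable with Lipschitz-continuous gradient with constant 1/σ: ‖∇f*(x*) − ∇f*(y*)‖₂ ≤ (1/σ)‖x* − y*‖₂ for all x*, y*. -/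
open scoped RealInnerProductSpace

/-- `xs` is a subgradient of `f` at `x`. -/
def SubgradAt {n : ℕ} (f : EuclideanSpace ℝ (Fin n) → ℝ)
    (x xs : EuclideanSpace ℝ (Fin n)) : Prop :=
  ∀ y, f y ≥ f x + (inner ℝ xs (y - x) : ℝ)

/-- The Fenchel conjugate `f*(xs) = sup_y ⟨xs, y⟩ - f y`. -/
noncomputable def fenchel {n : ℕ} (f : EuclideanSpace ℝ (Fin n) → ℝ)
    (xs : EuclideanSpace ℝ (Fin n)) : ℝ :=
  sSup {r : ℝ | ∃ y, r = (inner ℝ xs y : ℝ) - f y}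

lemma exists_subgrad' {n : ℕ} (f : EuclideanSpace ℝ (Fin n) → ℝ)
    (hconv : ConvexOn ℝ Set.univ f) :
    ∃ v : EuclideanSpace ℝ (Fin n), SubgradAt f 0 v := by
  classical
  have hf_cont : Continuous f :=
    continuousOn_univ.mp (hconv.continuousOn isOpen_univ)
  set s : Set (EuclideanSpace ℝ (Fin n) × ℝ) := {p | f p.1 < p.2} with hs
  have hs_open : IsOpen s := by
    have : s = (fun p : EuclideanSpace ℝ (Fin n) × ℝ => p.2 - f p.1) ⁻¹' Set.Ioi 0 := by
      ext p; simp [hs, sub_pos]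
    rw [this]
    exact (continuous_snd.sub (hf_cont.comp continuous_fst)).isOpen_preimage _ isOpen_Ioi
  have hs_conv : Convex ℝ s := by
    rintro ⟨y₁, t₁⟩ h1 ⟨y₂, t₂⟩ h2 a b ha hb hab
    simp only [hs, Set.mem_setOf_eq] at h1 h2 ⊢
    have hcc := hconv.2 (Set.mem_univ y₁) (Set.mem_univ y₂) ha hb hab
    simp only [smul_eq_mul] at hcc
    calc f ((a • (y₁, t₁) + b • (y₂, t₂) : EuclideanSpace ℝ (Fin n) × ℝ)).1
        = f (a • y₁ + b • y₂) := by simp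
      _ ≤ a * f y₁ + b * f y₂ := hcc
      _ < a * t₁ + b * t₂ := by
          rcases eq_or_lt_of_le ha with rfl | ha'
          · simpa [show b = 1 by linarith] using h2
          · have h1' : a * f y₁ < a * t₁ := by nlinarith
            nlinarith [mul_le_mul_of_nonneg_left h2.le hb]
      _ = ((a • (y₁, t₁) + b • (y₂, t₂) : EuclideanSpace ℝ (Fin n) × ℝ)).2 := by simp
  have hnotmem : ((0 : EuclideanSpace ℝ (Fin n)), f 0) ∉ s := by simp [hs]
  obtain ⟨φ, hφ⟩ := geometric_hahn_banach_open_point hs_conv hs_open hnotmem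
  set c := φ (0, 1) with hc
  have hdecomp : ∀ (y : EuclideanSpace ℝ (Fin n)) (t : ℝ), φ (y, t) = φ (y, 0) + t * c := by
    intro y t
    have h1 : (y, t) = (y, (0:ℝ)) + t • ((0:EuclideanSpace ℝ (Fin n)), (1:ℝ)) := by
      simp [Prod.ext_iff]
    rw [h1, map_add, map_smul, smul_eq_mul]
  have hcneg : c < 0 := by
    have h1 : ((0:EuclideanSpace ℝ (Fin n)), f 0 + 1) ∈ s := by simp [hs]
    have := hφ _ h1
    rw [hdecomp 0 (f 0 + 1), hdecomp 0 (f 0)] at this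
    nlinarith
  have hkey : ∀ y : EuclideanSpace ℝ (Fin n), φ (y, 0) + f y * c ≤ φ (0, (0:ℝ)) + f 0 * c := by
    intro y
    refine le_of_forall_pos_le_add ?_
    intro ε hε
    have hmem : (y, f y + ε / (-c)) ∈ s := by
      simp only [hs, Set.mem_setOf_eq]
      have : 0 < ε / (-c) := div_pos hε (by linarith)
      linarith
    have h2 := hφ _ hmem
    rw [hdecomp y (f y + ε / (-c)), hdecomp 0 (f 0)] at h2
    have hcne : c ≠ 0 := hcneg.ne
    have heq : (ε / (-c)) * c = -ε := by
      rw [div_neg, neg_mul, div_mul_cancel₀ _ hcne]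
    nlinarith [h2, heq]
  have hφ00 : φ ((0:EuclideanSpace ℝ (Fin n)), (0:ℝ)) = 0 := by
    exact map_zero φ
  set ψ : (EuclideanSpace ℝ (Fin n)) →L[ℝ] ℝ :=
    (-c)⁻¹ • (φ.comp (ContinuousLinearMap.inl ℝ (EuclideanSpace ℝ (Fin n)) ℝ)) with hψ
  refine ⟨(InnerProductSpace.toDual ℝ (EuclideanSpace ℝ (Fin n))).symm ψ, ?_⟩
  intro y
  have hrep : ⟪(InnerProductSpace.toDual ℝ (EuclideanSpace ℝ (Fin n))).symm ψ, y - 0⟫ = ψ (y - 0) := by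
    rw [← InnerProductSpace.toDual_symm_apply]
  rw [hrep]
  have h := hkey y
  rw [hφ00] at h
  have hψy : ψ (y - 0) = (-c)⁻¹ * φ (y, 0) := by
    simp [hψ, ContinuousLinearMap.inl]
  rw [hψy]
  have hcpos : 0 < -c := by linarith
  rw [ge_iff_le, ← sub_nonneg]
  have hrw : f y - (f 0 + (-c)⁻¹ * φ (y,0)) = ((-c) * (f y - f 0) - φ (y,0)) / (-c) := by
    have hcne : c ≠ 0 := hcneg.ne
    rw [eq_div_iff (by linarith : (-c) ≠ 0)]
    field_simp
    ring
  rw [hrw]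
  apply div_nonneg _ hcpos.le
  nlinarith

/-- every `p` is attained as a subgradient (the conjugate sup is attained). -/
lemma exists_point_subgradAt {n : ℕ} (f : EuclideanSpace ℝ (Fin n) → ℝ) (σ : ℝ) (hσ : 0 < σ)
    (hconv : ConvexOn ℝ Set.univ f)
    (hsc : ∀ x y xs, SubgradAt f x xs →
      f y ≥ f x + (inner ℝ xs (y - x) : ℝ) + σ / 2 * ‖y - x‖ ^ 2)
    (p : EuclideanSpace ℝ (Fin n)) :
    ∃ x, SubgradAt f x p := by
  classical
  have hf_cont : Continuous f :=
    continuousOn_univ.mp (hconv.continuousOn isOpen_univ)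
  obtain ⟨v, hv⟩ := exists_subgrad' f hconv
  have hquad : ∀ y, f y ≥ f 0 + ⟪v, y⟫ + σ / 2 * ‖y‖ ^ 2 := by
    intro y
    have := hsc 0 y v hv
    simpa using this
  set φ : EuclideanSpace ℝ (Fin n) → ℝ := fun y => ⟪p, y⟫ - f y with hφ
  have hφcont : Continuous φ := by
    exact ((continuous_const.inner continuous_id)).sub hf_cont
  clear_value φ
  set K := ‖p - v‖ with hK
  set R := 2 * K / σ + 1 with hR
  clear_value K R
  have hRpos : 0 < R := by
    have hK0 : (0:ℝ) ≤ K := hK ▸ norm_nonneg _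
    rw [hR]; positivity
  obtain ⟨x, hxmem, hxmax⟩ := (isCompact_closedBall (0 : EuclideanSpace ℝ (Fin n)) R).exists_isMaxOn
    ⟨0, Metric.mem_closedBall_self hRpos.le⟩ hφcont.continuousOn
  have hx0 : φ 0 ≤ φ x := hxmax (Metric.mem_closedBall_self hRpos.le)
  have hout : ∀ y, R ≤ ‖y‖ → φ y < φ 0 := by
    intro y hy
    have h1 : φ y ≤ ⟪p - v, y⟫ - f 0 - σ / 2 * ‖y‖ ^ 2 := by
      have := hquad y
      simp only [hφ, inner_sub_left]
      linarith
    have h2 : ⟪p - v, y⟫ ≤ K * ‖y‖ := by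
      calc ⟪p - v, y⟫ ≤ ‖p - v‖ * ‖y‖ := real_inner_le_norm _ _
        _ = K * ‖y‖ := by rw [hK]
    have h3 : φ 0 = - f 0 := by simp [hφ]
    have hK0 : (0:ℝ) ≤ K := hK ▸ norm_nonneg _
    have h4 : σ * R = 2 * K + σ := by rw [hR]; field_simp
    have h5 : 2 * K + σ ≤ σ * ‖y‖ := by nlinarith [mul_le_mul_of_nonneg_left hy hσ.le]
    have ht1 : 1 ≤ ‖y‖ := by nlinarith
    have h6 : K * ‖y‖ - σ / 2 * ‖y‖ ^ 2 < 0 := by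
      nlinarith [mul_le_mul_of_nonneg_right h5 (norm_nonneg y)]
    rw [h3]
    have hp1 : (⟪p - v, y⟫ : ℝ) - σ / 2 * ‖y‖ ^ 2 < 0 := by linarith [h2, h6]
    linarith [h1, hp1]
  have hglobal : ∀ y, φ y ≤ φ x := by
    intro y
    by_cases hy : y ∈ Metric.closedBall (0 : EuclideanSpace ℝ (Fin n)) R
    · exact hxmax hy
    · have : R ≤ ‖y‖ := by
        simp only [Metric.mem_closedBall, dist_zero_right, not_le] at hy
        exact hy.le
      exact le_trans (hout y this).le hx0
  refine ⟨x, ?_⟩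
  intro y
  have := hglobal y
  simp only [hφ] at this
  rw [ge_iff_le, inner_sub_right]
  linarith

lemma lipschitz_of_subgrads {n : ℕ} (f : EuclideanSpace ℝ (Fin n) → ℝ) (σ : ℝ) (hσ : 0 < σ)
    (hsc : ∀ x y xs, SubgradAt f x xs →
      f y ≥ f x + (inner ℝ xs (y - x) : ℝ) + σ / 2 * ‖y - x‖ ^ 2)
    {x y p q : EuclideanSpace ℝ (Fin n)}
    (hx : SubgradAt f x p) (hy : SubgradAt f y q) :
    ‖x - y‖ ≤ (1 / σ) * ‖p - q‖ := by
  have h1 := hsc x y p hx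
  have h2 := hsc y x q hy
  have hmono : σ * ‖x - y‖ ^ 2 ≤ ⟪p - q, x - y⟫ := by
    have e1 : ⟪p, y - x⟫ = -⟪p, x - y⟫ := by
      rw [← inner_neg_right, neg_sub]
    have e2 : ‖y - x‖ = ‖x - y‖ := norm_sub_rev _ _
    rw [inner_sub_left]
    rw [e1, e2] at h1
    linarith
  have hcs : ⟪p - q, x - y⟫ ≤ ‖p - q‖ * ‖x - y‖ := real_inner_le_norm _ _
  rcases eq_or_lt_of_le (norm_nonneg (x - y)) with h0 | h0
  · rw [← h0]; positivity
  · have : σ * ‖x - y‖ ≤ ‖p - q‖ := by nlinarith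
    rw [div_mul_eq_mul_div, le_div_iff₀ hσ, one_mul, mul_comm]
    exact this

lemma fenchel_eq {n : ℕ} (f : EuclideanSpace ℝ (Fin n) → ℝ)
    {x p : EuclideanSpace ℝ (Fin n)} (hx : SubgradAt f x p) :
    fenchel f p = ⟪p, x⟫ - f x := by
  have hub : ∀ r ∈ {r : ℝ | ∃ y, r = (inner ℝ p y : ℝ) - f y}, r ≤ ⟪p, x⟫ - f x := by
    rintro r ⟨y, rfl⟩
    have := hx y
    rw [inner_sub_right] at this
    linarith
  refine le_antisymm (csSup_le ⟨_, ⟨x, rfl⟩⟩ hub) (le_csSup ⟨_, hub⟩ ⟨x, rfl⟩)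

/-- If `f` is `σ`-strongly convex then `f*` is differentiable with
Lipschitz-continuous gradient with constant `1/σ`. -/
theorem conjugate_smooth_of_stronglyConvex {n : ℕ}
    (f : EuclideanSpace ℝ (Fin n) → ℝ) (σ : ℝ) (hσ : 0 < σ)
    (hconv : ConvexOn ℝ Set.univ f)
    (hsc : ∀ x y xs, SubgradAt f x xs →
      f y ≥ f x + (inner ℝ xs (y - x) : ℝ) + σ / 2 * ‖y - x‖ ^ 2) :
    ∃ g : EuclideanSpace ℝ (Fin n) → EuclideanSpace ℝ (Fin n),
      (∀ p, HasGradientAt (fenchel f) (g p) p) ∧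
      (∀ p q, ‖g p - g q‖ ≤ (1 / σ) * ‖p - q‖) := by
  classical
  choose g hg using exists_point_subgradAt f σ hσ hconv hsc
  have hlip : ∀ p q, ‖g p - g q‖ ≤ (1 / σ) * ‖p - q‖ := fun p q =>
    lipschitz_of_subgrads f σ hσ hsc (hg p) (hg q)
  refine ⟨g, fun p => ?_, hlip⟩
  rw [hasGradientAt_iff_isLittleO]
  have hlower : ∀ q, 0 ≤ fenchel f q - fenchel f p - ⟪g p, q - p⟫ := by
    intro q
    rw [fenchel_eq f (hg p), fenchel_eq f (hg q)]
    have h1 : ⟪q, g p⟫ - f (g p) ≤ ⟪q, g q⟫ - f (g q) := by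
      have := hg q (g p)
      rw [inner_sub_right] at this
      linarith
    have h2 : ⟪g p, q - p⟫ = ⟪q, g p⟫ - ⟪p, g p⟫ := by
      rw [real_inner_comm, inner_sub_left]
    linarith
  have hupper : ∀ q, fenchel f q - fenchel f p - ⟪g p, q - p⟫ ≤ (1 / σ) * ‖q - p‖ ^ 2 := by
    intro q
    rw [fenchel_eq f (hg p), fenchel_eq f (hg q)]
    have h1 : ⟪p, g q⟫ - f (g q) ≤ ⟪p, g p⟫ - f (g p) := by
      have := hg p (g q)
      rw [inner_sub_right] at this
      linarith
    have h2 : ⟪g p, q - p⟫ = ⟪q - p, g p⟫ := real_inner_comm _ _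
    have h3 : ⟪q, g q⟫ - ⟪p, g q⟫ = ⟪q - p, g q⟫ := (inner_sub_left _ _ _).symm
    have h4 : ⟪q - p, g q⟫ - ⟪q - p, g p⟫ = ⟪q - p, g q - g p⟫ := (inner_sub_right _ _ _).symm
    have h5 : ⟪q - p, g q - g p⟫ ≤ ‖q - p‖ * ‖g q - g p‖ := real_inner_le_norm _ _
    have h6 : ‖g q - g p‖ ≤ (1 / σ) * ‖q - p‖ := hlip q p
    have h7 : ‖q - p‖ * ‖g q - g p‖ ≤ ‖q - p‖ * ((1 / σ) * ‖q - p‖) :=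
      mul_le_mul_of_nonneg_left h6 (norm_nonneg _)
    have : (fenchel f q - fenchel f p) ≤ ⟪q - p, g q⟫ := by
      rw [fenchel_eq f (hg p), fenchel_eq f (hg q), ← h3]
      linarith
    nlinarith [this, fenchel_eq f (hg p), fenchel_eq f (hg q)]
  rw [Asymptotics.isLittleO_iff]
  intro c hc
  filter_upwards [Metric.ball_mem_nhds p (mul_pos hc hσ)] with q hq
  rw [Metric.mem_ball, dist_eq_norm] at hq
  have h1 := hlower q
  have h2 := hupper q
  rw [Real.norm_eq_abs, abs_of_nonneg h1]
  have hqp : (0:ℝ) ≤ ‖q - p‖ := norm_nonneg _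
  have h3 : ‖q - p‖ ^ 2 ≤ (c * σ) * ‖q - p‖ := by nlinarith
  have h4 : (1 / σ) * ‖q - p‖ ^ 2 ≤ (1 / σ) * ((c * σ) * ‖q - p‖) := by
    apply mul_le_mul_of_nonneg_left h3; positivity
  have h5 : (1 / σ) * ((c * σ) * ‖q - p‖) = c * ‖q - p‖ := by field_simp
  linarith
end

section
/- For any Lipschitz-continuously differentiable convex function g on ℝ^n with nonempty optimal set, the PL inequality implies the quadratic growth condition: if g(y) − min g ≤ (1/(2μ))‖∇g(y)‖₂² for all y, then g(y) − min g ≥ (μ/2)·dist(y, argmin g)² for all y (possibly with the same constant μ up to a factor). -/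
open Real Set Filter Metric
open scoped RealInnerProductSpace Topology

lemma quad_ub {E : Type*} [NormedAddCommGroup E] [InnerProductSpace ℝ E] [CompleteSpace E]
    (g : E → ℝ) (G : E → E) (hG : ∀ y, HasGradientAt g (G y) y)
    (L : ℝ) (hL : 0 ≤ L) (hLip : ∀ y z, ‖G y - G z‖ ≤ L * ‖y - z‖)
    (x v : E) : g (x + v) ≤ g x + ⟪G x, v⟫ + L / 2 * ‖v‖ ^ 2 := by
  set h : ℝ → ℝ := fun t => g (x + t • v) with hh
  have hd : ∀ t : ℝ, HasDerivAt h ⟪G (x + t • v), v⟫ t := by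
    intro t
    have h1 : HasFDerivAt g (InnerProductSpace.toDual ℝ E (G (x + t • v))) (x + t • v) :=
      (hasGradientAt_iff_hasFDerivAt.mp (hG _))
    have h2 : HasDerivAt (fun t : ℝ => x + t • v) v t := by
      simpa using ((hasDerivAt_id t).smul_const v).const_add x
    exact (h1.comp_hasDerivAt t h2).congr_deriv (by simp)
  set φ : ℝ → ℝ := fun t => g x + t * ⟪G x, v⟫ + L / 2 * t ^ 2 * ‖v‖ ^ 2 - h t with hφdef
  have hφ : ∀ t : ℝ, HasDerivAt φ
      (⟪G x, v⟫ + L / 2 * (2 * t) * ‖v‖ ^ 2 - ⟪G (x + t • v), v⟫) t := by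
    intro t
    have := (((hasDerivAt_const t (g x)).add ((hasDerivAt_id t).mul_const ⟪G x, v⟫)).add
      (((hasDerivAt_pow 2 t).const_mul (L / 2)).mul_const (‖v‖ ^ 2))).sub (hd t)
    exact this.congr_deriv (by rw [show (2:ℕ) - 1 = 1 from rfl, pow_one]; push_cast; ring)
  have hmono : MonotoneOn φ (Icc (0:ℝ) 1) := by
    apply monotoneOn_of_deriv_nonneg (convex_Icc 0 1)
    · exact fun t _ => ((hφ t).differentiableAt.continuousAt).continuousWithinAt
    · exact fun t _ => ((hφ t).differentiableAt).differentiableWithinAt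
    · intro t ht
      rw [interior_Icc] at ht
      rw [(hφ t).deriv]
      have h2 : ‖G (x + t • v) - G x‖ ≤ L * (t * ‖v‖) := by
        have := hLip (x + t • v) x
        simpa [norm_smul, abs_of_nonneg ht.1.le] using this
      have h3 : ⟪G (x + t • v) - G x, v⟫ ≤ L * (t * ‖v‖) * ‖v‖ :=
        le_trans (real_inner_le_norm _ _)
          (mul_le_mul_of_nonneg_right h2 (norm_nonneg v))
      rw [inner_sub_left] at h3
      nlinarith [h3]
  have h01 : φ 0 ≤ φ 1 := hmono (by norm_num) (by norm_num) (by norm_num)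
  simp only [hφdef, hh, zero_smul, add_zero, one_smul] at h01
  nlinarith [h01]

/-- For a convex differentiable function `g` with Lipschitz gradient and
nonempty optimal set, the PL inequality implies the quadratic growth condition
(possibly with a different constant `μ'`). -/
theorem pl_implies_quadratic_growth {m : ℕ}
    (g : EuclideanSpace ℝ (Fin m) → ℝ)
    (G : EuclideanSpace ℝ (Fin m) → EuclideanSpace ℝ (Fin m))
    (hG : ∀ y, HasGradientAt g (G y) y)
    (L : ℝ) (hL : 0 < L) (hLip : ∀ y z, ‖G y - G z‖ ≤ L * ‖y - z‖)
    (hconv : ConvexOn ℝ Set.univ g)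
    (yhat : EuclideanSpace ℝ (Fin m)) (hmin : ∀ y, g yhat ≤ g y)
    (μ : ℝ) (hμ : 0 < μ)
    (hPL : ∀ y, g y - g yhat ≤ 1 / (2 * μ) * ‖G y‖ ^ 2) :
    ∃ μ' > (0 : ℝ), ∀ y, g y - g yhat ≥
      μ' / 2 * (Metric.infDist y {z | ∀ w, g z ≤ g w}) ^ 2 := by
  classical
  set μ₀ : ℝ := min μ L with hμ₀def
  have hμ₀pos : 0 < μ₀ := lt_min hμ hL
  have hμ₀L : μ₀ ≤ L := min_le_right _ _
  have hPL' : ∀ y, 2 * μ₀ * (g y - g yhat) ≤ ‖G y‖ ^ 2 := by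
    intro y
    have h1 := hPL y
    have h2 : 1 / (2 * μ) * ‖G y‖ ^ 2 ≤ 1 / (2 * μ₀) * ‖G y‖ ^ 2 := by
      apply mul_le_mul_of_nonneg_right _ (sq_nonneg _)
      apply one_div_le_one_div_of_le (by positivity)
      have : μ₀ ≤ μ := min_le_left _ _
      linarith
    have h3 : g y - g yhat ≤ 1 / (2 * μ₀) * ‖G y‖ ^ 2 := h1.trans h2
    have := hμ₀pos
    rw [div_mul_eq_mul_div, le_div_iff₀ (by positivity)] at h3
    linarith [h3]
  set r : ℝ := 1 - μ₀ / L with hrdef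
  have hr0 : 0 ≤ r := by
    have : μ₀ / L ≤ 1 := (div_le_one hL).mpr hμ₀L
    simp only [hrdef]; linarith
  have hr1 : r < 1 := by
    have : 0 < μ₀ / L := by positivity
    simp only [hrdef]; linarith
  set ρ : ℝ := Real.sqrt r with hρdef
  have hρ0 : 0 ≤ ρ := Real.sqrt_nonneg r
  have hρ1 : ρ < 1 := by
    rw [hρdef, Real.sqrt_lt' one_pos]; simpa using hr1
  have hρr : ρ ^ 2 = r := Real.sq_sqrt hr0
  have h1ρ : 0 < 1 - ρ := by linarith
  refine ⟨L * (1 - ρ) ^ 2, mul_pos hL (pow_pos h1ρ 2), ?_⟩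
  intro y
  set Δ0 : ℝ := g y - g yhat with hΔ0def
  have hΔ0 : 0 ≤ Δ0 := sub_nonneg.mpr (hmin y)
  -- gradient descent sequence
  set x : ℕ → EuclideanSpace ℝ (Fin m) := fun n => Nat.rec y (fun _ p => p - (1 / L) • G p) n with hxdef
  have hx0 : x 0 = y := rfl
  have hxs : ∀ n, x (n + 1) = x n - (1 / L) • G (x n) := fun n => rfl
  -- descent lemma per step
  have hdesc : ∀ n, g (x (n + 1)) ≤ g (x n) - 1 / (2 * L) * ‖G (x n)‖ ^ 2 := by
    intro n
    have h1 := quad_ub g G hG L hL.le hLip (x n) (-((1 / L) • G (x n)))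
    rw [← sub_eq_add_neg] at h1
    rw [hxs n]
    have h2 : ⟪G (x n), -((1 / L) • G (x n))⟫ = -(1 / L) * ‖G (x n)‖ ^ 2 := by
      rw [inner_neg_right, real_inner_smul_right, real_inner_self_eq_norm_sq]; ring
    have h3 : ‖-((1 / L) • G (x n))‖ ^ 2 = (1 / L) ^ 2 * ‖G (x n)‖ ^ 2 := by
      rw [norm_neg, norm_smul]
      simp [abs_of_pos (by positivity : (0:ℝ) < 1 / L), mul_pow]
    rw [h2, h3] at h1
    have hLne : L ≠ 0 := hL.ne'
    calc g (x n - (1 / L) • G (x n)) ≤ g (x n) + -(1 / L) * ‖G (x n)‖ ^ 2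
          + L / 2 * ((1 / L) ^ 2 * ‖G (x n)‖ ^ 2) := h1
      _ = g (x n) - 1 / (2 * L) * ‖G (x n)‖ ^ 2 := by field_simp; ring
  -- geometric decay of the gap
  have hgap : ∀ n, g (x n) - g yhat ≤ Δ0 * r ^ n := by
    intro n
    induction n with
    | zero => simp [hx0, hΔ0def]
    | succ n ih =>
      have h1 := hdesc n
      have h2 := hPL' (x n)
      have h3 : g (x (n + 1)) - g yhat ≤ r * (g (x n) - g yhat) := by
        have hgapn : 0 ≤ g (x n) - g yhat := sub_nonneg.mpr (hmin _)
        have : 1 / (2 * L) * (2 * μ₀ * (g (x n) - g yhat)) ≤ 1 / (2 * L) * ‖G (x n)‖ ^ 2 :=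
          mul_le_mul_of_nonneg_left h2 (by positivity)
        have hr' : r * (g (x n) - g yhat) = (g (x n) - g yhat) - μ₀ / L * (g (x n) - g yhat) := by
          rw [hrdef]; ring
        rw [hr']
        have : μ₀ / L * (g (x n) - g yhat) = 1 / (2 * L) * (2 * μ₀ * (g (x n) - g yhat)) := by
          field_simp
        linarith [hdesc n, mul_le_mul_of_nonneg_left h2 (by positivity : (0:ℝ) ≤ 1 / (2 * L))]
      calc g (x (n + 1)) - g yhat ≤ r * (g (x n) - g yhat) := h3
        _ ≤ r * (Δ0 * r ^ n) := mul_le_mul_of_nonneg_left ih hr0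
        _ = Δ0 * r ^ (n + 1) := by ring
  -- step sizes geometric
  set C : ℝ := (1 / L) * Real.sqrt (2 * L * Δ0) with hCdef
  have hCnn : 0 ≤ C := by positivity
  have hstep : ∀ n, dist (x n) (x (n + 1)) ≤ C * ρ ^ n := by
    intro n
    have hGn2 : ‖G (x n)‖ ^ 2 ≤ 2 * L * Δ0 * r ^ n := by
      have h1 := hdesc n
      have h2 : g yhat ≤ g (x (n + 1)) := hmin _
      have h3 := hgap n
      have h4a : 1 / (2 * L) * ‖G (x n)‖ ^ 2 ≤ g (x n) - g (x (n + 1)) := by linarith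
      have h4b : g (x n) - g (x (n + 1)) ≤ g (x n) - g yhat := by linarith
      have h4 : 1 / (2 * L) * ‖G (x n)‖ ^ 2 ≤ Δ0 * r ^ n := le_trans h4a (le_trans h4b h3)
      have h5 : ‖G (x n)‖ ^ 2 = 2 * L * (1 / (2 * L) * ‖G (x n)‖ ^ 2) := by
        field_simp
      calc ‖G (x n)‖ ^ 2 = 2 * L * (1 / (2 * L) * ‖G (x n)‖ ^ 2) := h5
        _ ≤ 2 * L * (Δ0 * r ^ n) := mul_le_mul_of_nonneg_left h4 (by positivity)
        _ = 2 * L * Δ0 * r ^ n := by ring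
    have hGn : ‖G (x n)‖ ≤ Real.sqrt (2 * L * Δ0) * ρ ^ n := by
      have hpr : (ρ ^ n) ^ 2 = r ^ n := by
        rw [← pow_mul, mul_comm, pow_mul, hρr]
      have key : 2 * L * Δ0 * r ^ n = (Real.sqrt (2 * L * Δ0) * ρ ^ n) ^ 2 := by
        rw [mul_pow, Real.sq_sqrt (by positivity), hpr]
      rw [← Real.sqrt_sq (norm_nonneg (G (x n)))]
      rw [key] at hGn2
      calc Real.sqrt (‖G (x n)‖ ^ 2) ≤ Real.sqrt ((Real.sqrt (2 * L * Δ0) * ρ ^ n) ^ 2) :=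
            Real.sqrt_le_sqrt hGn2
        _ = Real.sqrt (2 * L * Δ0) * ρ ^ n := Real.sqrt_sq (by positivity)
    rw [hxs n, dist_eq_norm]
    have : x n - (x n - (1 / L) • G (x n)) = (1 / L) • G (x n) := by abel
    rw [this, norm_smul]
    simp only [Real.norm_eq_abs, abs_of_pos (by positivity : (0:ℝ) < 1 / L)]
    rw [hCdef, mul_assoc]
    exact mul_le_mul_of_nonneg_left hGn (by positivity)
  -- limit point
  have hcau : CauchySeq x := cauchySeq_of_le_geometric ρ C hρ1 hstep
  obtain ⟨a, ha⟩ := cauchySeq_tendsto_of_complete hcau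
  have hdista : dist (x 0) a ≤ C / (1 - ρ) :=
    dist_le_of_le_geometric_of_tendsto₀ ρ C hρ1 hstep ha
  have hgcont : Continuous g := by
    have : Differentiable ℝ g := fun z => (hG z).hasFDerivAt.differentiableAt
    exact this.continuous
  have hga : g a = g yhat := by
    have h1 : Tendsto (fun n => g (x n)) atTop (𝓝 (g a)) :=
      (hgcont.tendsto a).comp ha
    have h2 : Tendsto (fun n => g (x n)) atTop (𝓝 (g yhat)) := by
      have hub : Tendsto (fun n => g yhat + Δ0 * r ^ n) atTop (𝓝 (g yhat)) := by
        have := (tendsto_pow_atTop_nhds_zero_of_lt_one hr0 hr1).const_mul Δ0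
        simpa using tendsto_const_nhds.add this
      refine tendsto_of_tendsto_of_tendsto_of_le_of_le tendsto_const_nhds hub
        (fun n => hmin (x n)) (fun n => ?_)
      linarith [hgap n]
    exact tendsto_nhds_unique h1 h2
  have haS : a ∈ {z | ∀ w, g z ≤ g w} := fun w => hga ▸ hmin w
  have hD : Metric.infDist y {z | ∀ w, g z ≤ g w} ≤ C / (1 - ρ) :=
    (Metric.infDist_le_dist_of_mem haS).trans (by rw [← hx0]; exact hdista)
  set D : ℝ := Metric.infDist y {z | ∀ w, g z ≤ g w} with hDdef
  have hD0 : 0 ≤ D := Metric.infDist_nonneg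
  have h1 : D ^ 2 ≤ (C / (1 - ρ)) ^ 2 := pow_le_pow_left₀ hD0 hD 2
  have hC2 : C ^ 2 = 2 * Δ0 / L := by
    rw [hCdef, mul_pow, Real.sq_sqrt (by positivity)]
    field_simp
  have hρne : (1 : ℝ) - ρ ≠ 0 := by linarith
  have hfin : L * (1 - ρ) ^ 2 / 2 * ((C / (1 - ρ)) ^ 2) = Δ0 := by
    rw [div_pow, hC2]; field_simp
  have : L * (1 - ρ) ^ 2 / 2 * D ^ 2 ≤ Δ0 := by
    calc L * (1 - ρ) ^ 2 / 2 * D ^ 2 ≤ L * (1 - ρ) ^ 2 / 2 * ((C / (1 - ρ)) ^ 2) :=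
          mul_le_mul_of_nonneg_left h1 (by positivity)
      _ = Δ0 := hfin
  simpa [ge_iff_le, hΔ0def] using this
end

section
/- The sequence defined by θ₀ ∈ (0, 1] and θ_{k+1} = (√(θ_k⁴ + 4θ_k²) − θ_k²)/2 satisfies the two-sided bound (2 − θ₀)/(k + (2 − θ₀)/θ₀) ≤ θ_k ≤ 2/(k + 2/θ₀) for all k ≥ 0. -/
set_option maxHeartbeats 1600000 in
/-- The Tseng sequence `θ₀ ∈ (0,1]`, `θ_{k+1} = (√(θ_k⁴ + 4θ_k²) - θ_k²)/2`
satisfies the two-sided bound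
`(2 - θ₀)/(k + (2 - θ₀)/θ₀) ≤ θ_k ≤ 2/(k + 2/θ₀)`. -/
theorem tseng_seq_bounds (θ : ℕ → ℝ) (h0 : θ 0 ∈ Set.Ioc (0 : ℝ) 1)
    (hrec : ∀ k, θ (k + 1) =
      (Real.sqrt ((θ k) ^ 4 + 4 * (θ k) ^ 2) - (θ k) ^ 2) / 2) :
    ∀ k : ℕ, (2 - θ 0) / ((k : ℝ) + (2 - θ 0) / θ 0) ≤ θ k ∧
      θ k ≤ 2 / ((k : ℝ) + 2 / θ 0) := by
  obtain ⟨h0p, h0le⟩ := h0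
  have key : ∀ k : ℕ, 0 < θ k ∧ (k : ℝ)/2 + 1/θ 0 ≤ 1/θ k ∧
      1/θ k ≤ (k : ℝ)/(2 - θ 0) + 1/θ 0 := by
    intro k
    induction k with
    | zero => exact ⟨h0p, by simp, by simp⟩
    | succ n ih =>
      obtain ⟨hp, hlo, hhi⟩ := ih
      have ha2 : 0 < (θ n)^2 := by positivity
      have hargnn : (0:ℝ) ≤ (θ n)^4 + 4*(θ n)^2 := by positivity
      have hsq : (θ n)^2 < Real.sqrt ((θ n)^4 + 4*(θ n)^2) := by
        rw [show (θ n)^4 + 4*(θ n)^2 = ((θ n)^2)^2 + 4*(θ n)^2 by ring]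
        nlinarith [Real.sq_sqrt (show (0:ℝ) ≤ ((θ n)^2)^2 + 4*(θ n)^2 by positivity),
          Real.sqrt_nonneg (((θ n)^2)^2 + 4*(θ n)^2)]
      have hpos : 0 < θ (n+1) := by rw [hrec n]; linarith
      have hid : (θ (n+1))^2 + θ (n+1) * (θ n)^2 = (θ n)^2 := by
        have h1 : Real.sqrt ((θ n)^4 + 4*(θ n)^2) = 2 * θ (n+1) + (θ n)^2 := by
          rw [hrec n]; ring
        have h2 : (Real.sqrt ((θ n)^4 + 4*(θ n)^2))^2 = (θ n)^4 + 4*(θ n)^2 :=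
          Real.sq_sqrt hargnn
        rw [h1] at h2
        nlinarith [h2]
      obtain ⟨s, hs⟩ : ∃ x : ℝ, x = 1 / θ (n+1) := ⟨_, rfl⟩
      obtain ⟨t, ht⟩ : ∃ x : ℝ, x = 1 / θ n := ⟨_, rfl⟩
      rw [← ht] at hlo hhi
      have hspos : 0 < s := by rw [hs]; positivity
      have htpos : 0 < t := by rw [ht]; positivity
      have hst2 : s^2 - s = t^2 := by
        rw [hs, ht]
        field_simp
        nlinarith [hid]
      have htge : 1/θ 0 ≤ t := by
        have : (0:ℝ) ≤ (n:ℝ)/2 := by positivity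
        linarith
      have h0inv : 1 ≤ 1/θ 0 := by
        rw [le_div_iff₀ h0p]; linarith
      have httheta : 1 ≤ t * θ 0 := by
        have := htge
        rw [div_le_iff₀ h0p] at this
        linarith
      have hsgt : t ≤ s := by nlinarith
      have hs1 : s ≤ t + 1 := by nlinarith
      refine ⟨hpos, ?_, ?_⟩
      · push_cast
        rw [← hs]
        have : t + 1/2 ≤ s := by nlinarith
        linarith
      · push_cast
        rw [← hs]
        have hd : 0 < 2 - θ 0 := by linarith
        have h2 : s * (1 - θ 0) ≤ t := by
          nlinarith [mul_nonneg (by linarith : (0:ℝ) ≤ t + 1 - s)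
            (by linarith : (0:ℝ) ≤ 1 - θ 0)]
        have : s ≤ t + 1/(2 - θ 0) := by
          rw [show t + 1/(2 - θ 0) = (t*(2 - θ 0) + 1)/(2 - θ 0) by field_simp,
            le_div_iff₀ hd]
          have hA : s*(2 - θ 0) ≤ s + t := by nlinarith [h2]
          have hB : (s - t) * (s*(2 - θ 0)) ≤ (s - t) * (s + t) :=
            mul_le_mul_of_nonneg_left hA (by linarith)
          have hC : (s - t) * (s + t) = s := by linear_combination hst2
          rw [hC] at hB
          have hD : (s - t)*(2 - θ 0) ≤ 1 := by nlinarith [hB, hspos]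
          nlinarith [hD]
        calc s ≤ t + 1/(2-θ 0) := this
          _ ≤ ((n:ℝ)/(2-θ 0) + 1/θ 0) + 1/(2-θ 0) := by linarith
          _ = ((n:ℝ)+1)/(2-θ 0) + 1/θ 0 := by field_simp; ring
      done
  intro k
  obtain ⟨hp, hlo, hhi⟩ := key k
  have hd2 : 0 < 2 - θ 0 := by linarith
  constructor
  · have hden : 0 < (k:ℝ) + (2 - θ 0)/θ 0 := by positivity
    have h1 : 1/θ k ≤ (k:ℝ)/(2 - θ 0) + 1/θ 0 := hhi
    rw [div_add_div _ _ (ne_of_gt hd2) (ne_of_gt h0p), div_le_div_iff₀ hp (by positivity)] at h1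
    rw [show (k:ℝ) + (2 - θ 0)/θ 0 = ((k:ℝ)*θ 0 + (2 - θ 0))/θ 0 by field_simp,
      div_div_eq_mul_div, div_le_iff₀ (by nlinarith : (0:ℝ) < (k:ℝ)*θ 0 + (2 - θ 0))]
    nlinarith [h1]
  · have hden : 0 < (k:ℝ) + 2/θ 0 := by positivity
    have h1 : (k:ℝ)/2 + 1/θ 0 ≤ 1/θ k := hlo
    have h2 : 0 < 2 * θ 0 := by positivity
    rw [div_add_div _ _ (two_ne_zero) (ne_of_gt h0p), div_le_div_iff₀ h2 hp] at h1
    rw [show (k:ℝ) + 2/θ 0 = ((k:ℝ)*θ 0 + 2)/θ 0 by field_simp,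
      div_div_eq_mul_div, le_div_iff₀ (by positivity : (0:ℝ) < (k:ℝ)*θ 0 + 2)]
    nlinarith [h1]
end

section
/- Let f : ℝ^n → ℝ be strongly convex with conjugate f*, let A be an m × n matrix, b ∈ range(A), and define the dual function Ψ(y) = f*(Aᵀy) − bᵀy with minimum value Ψ̂. If x̂ is the unique solution of min f(x) s.t. Ax = b, then for any y ∈ ℝ^m, setting d = Aᵀy and x = ∇f*(d), one has d ∈ ∂f(x) and D_f^d(x, x̂) = Ψ(y) − Ψ̂. -/
lemma exists_subgradAt {n : ℕ} (f : EuclideanSpace ℝ (Fin n) → ℝ)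
    (hconv : ConvexOn ℝ Set.univ f) (x0 : EuclideanSpace ℝ (Fin n)) :
    ∃ xs, SubgradAt f x0 xs := by
  have hcont : Continuous f := continuousOn_univ.mp (hconv.continuousOn isOpen_univ)
  set s : Set (EuclideanSpace ℝ (Fin n) × ℝ) := {p | f p.1 < p.2} with hs
  have hconvs : Convex ℝ s := by
    rintro ⟨z, t⟩ hz ⟨w, u⟩ hw a b ha hb hab
    simp only [hs, Set.mem_setOf_eq] at hz hw ⊢
    have h1 : f (a • z + b • w) ≤ a * f z + b * f w := by
      simpa using hconv.2 (Set.mem_univ z) (Set.mem_univ w) ha hb hab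
    have key : a * f z + b * f w < a * t + b * u := by
      rcases lt_or_eq_of_le ha with ha' | ha'
      · nlinarith [mul_le_mul_of_nonneg_left hw.le hb]
      · have hb1 : b = 1 := by linarith
        nlinarith [mul_le_mul_of_nonneg_left hz.le ha]
    calc f ((a • (z, t) + b • (w, u)).1) = f (a • z + b • w) := by simp
      _ ≤ a * f z + b * f w := h1
      _ < a * t + b * u := key
      _ = (a • (z, t) + b • (w, u)).2 := by simp [smul_eq_mul]
  have hopen : IsOpen s := isOpen_lt (hcont.comp continuous_fst) continuous_snd
  have hx0 : ((x0, f x0) : _ × ℝ) ∉ s := by simp [hs]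
  obtain ⟨ℓ, hℓ⟩ := geometric_hahn_banach_open_point hconvs hopen hx0
  set c : ℝ := ℓ (0, 1) with hc
  have hcneg : c < 0 := by
    have h1 := hℓ (x0, f x0 + 1) (by simp [hs])
    have h2 : ℓ (x0, f x0 + 1) = ℓ (x0, f x0) + c := by
      rw [hc, ← map_add]; norm_num
    linarith
  have hcpos : 0 < -c := by linarith
  have hdec : ∀ z t, ℓ (z, t) = ℓ (z, 0) + t * c := by
    intro z t
    have h : ((z, t) : _ × ℝ) = (z, 0) + t • ((0 : EuclideanSpace ℝ (Fin n)), (1:ℝ)) := by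
      simp
    rw [h, map_add, map_smul, smul_eq_mul, hc]
  have key : ∀ z, ℓ (z, 0) + f z * c ≤ ℓ (x0, 0) + f x0 * c := by
    intro z
    have h2 : ∀ ε > (0:ℝ), ℓ (z, 0) + f z * c ≤ ℓ (x0, 0) + f x0 * c + ε * (-c) := by
      intro ε hε
      have h3 := hℓ (z, f z + ε) (by simp [hs]; linarith)
      rw [hdec z (f z + ε), hdec x0 (f x0)] at h3
      nlinarith
    by_contra hcon
    push_neg at hcon
    set δ := (ℓ (z, 0) + f z * c) - (ℓ (x0, 0) + f x0 * c) with hδ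
    have hδpos : 0 < δ := by linarith
    have hεpos : 0 < δ / (2 * (-c)) := div_pos hδpos (by linarith)
    have h4 := h2 _ hεpos
    have hcne : c ≠ 0 := ne_of_lt hcneg
    have hεc : (δ / (2 * (-c))) * (-c) = δ / 2 := by
      field_simp
    rw [hεc] at h4
    linarith
  set ℓ₁ : EuclideanSpace ℝ (Fin n) →L[ℝ] ℝ :=
    ℓ.comp (ContinuousLinearMap.inl ℝ (EuclideanSpace ℝ (Fin n)) ℝ) with hℓ₁
  set v := (InnerProductSpace.toDual ℝ (EuclideanSpace ℝ (Fin n))).symm ℓ₁ with hv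
  have hvz : ∀ w, (inner ℝ v w : ℝ) = ℓ (w, 0) := by
    intro w
    rw [hv, InnerProductSpace.toDual_symm_apply]
    rfl
  refine ⟨(-c)⁻¹ • v, fun z => ?_⟩
  have hk := key z
  have h4 : c * (f z - f x0) ≤ (inner ℝ v x0 : ℝ) - inner ℝ v z := by
    rw [hvz, hvz]; linarith
  have h5 : (inner ℝ ((-c)⁻¹ • v) (z - x0) : ℝ) = (-c)⁻¹ * ((inner ℝ v z : ℝ) - inner ℝ v x0) := by
    rw [real_inner_smul_left, inner_sub_right]
  have h7 : (inner ℝ v z : ℝ) - inner ℝ v x0 ≤ (-c) * (f z - f x0) := by linarith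
  have h8 := mul_le_mul_of_nonneg_left h7 (le_of_lt (inv_pos.mpr hcpos))
  rw [inv_mul_cancel_left₀ (ne_of_gt hcpos)] at h8
  rw [ge_iff_le, h5]
  linarith

lemma fenchel_argmax {n : ℕ} (f : EuclideanSpace ℝ (Fin n) → ℝ) (σ : ℝ) (hσ : 0 < σ)
    (hconv : ConvexOn ℝ Set.univ f)
    (hsc : ∀ x y xs, SubgradAt f x xs →
      f y ≥ f x + (inner ℝ xs (y - x) : ℝ) + σ / 2 * ‖y - x‖ ^ 2)
    (p : EuclideanSpace ℝ (Fin n)) :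
    ∃ x, SubgradAt f x p ∧ fenchel f p = (inner ℝ p x : ℝ) - f x ∧
      ∀ z, (inner ℝ p z : ℝ) - f z ≤ (inner ℝ p x : ℝ) - f x := by
  obtain ⟨xs0, hxs0⟩ := exists_subgradAt f hconv 0
  have growth : ∀ z, f z ≥ f 0 + (inner ℝ xs0 z : ℝ) + σ / 2 * ‖z‖ ^ 2 := by
    intro z
    simpa using hsc 0 z xs0 hxs0
  set K := ‖xs0 - p‖ with hK
  have hKnn : (0:ℝ) ≤ K := norm_nonneg _
  set R := 2 * K / σ + 1 with hR
  have hRpos : 0 < R := by positivity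
  have hcont : Continuous f := continuousOn_univ.mp (hconv.continuousOn isOpen_univ)
  set h : EuclideanSpace ℝ (Fin n) → ℝ := fun z => f z - inner ℝ p z with hh
  have hhcont : Continuous h := hcont.sub (continuous_const.inner continuous_id)
  have hlb : ∀ z : EuclideanSpace ℝ (Fin n), ‖z‖ > R → h 0 < h z := by
    intro z hz
    have h1 := growth z
    have h2 : (inner ℝ xs0 z : ℝ) - inner ℝ p z = inner ℝ (xs0 - p) z := (inner_sub_left _ _ _).symm
    have h3 : -(K * ‖z‖) ≤ (inner ℝ (xs0 - p) z : ℝ) := by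
      have := abs_real_inner_le_norm (xs0 - p) z
      have := neg_abs_le (inner ℝ (xs0 - p) z : ℝ)
      linarith
    have h0 : h 0 = f 0 := by simp [hh]
    have hzpos : (0:ℝ) < ‖z‖ := lt_trans hRpos hz
    have h5 : 2 * K < ‖z‖ * σ := by
      have h5a : 2 * K / σ < ‖z‖ := by rw [hR] at hz; linarith
      exact (div_lt_iff₀ hσ).mp h5a
    have h6 : 0 < σ / 2 * ‖z‖ ^ 2 - K * ‖z‖ := by
      nlinarith [mul_pos hzpos (sub_pos.mpr h5)]
    simp only [hh] at h0 ⊢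
    nlinarith
  have h0mem : (0 : EuclideanSpace ℝ (Fin n)) ∈ Metric.closedBall (0 : EuclideanSpace ℝ (Fin n)) R := by
    simp [hRpos.le]
  obtain ⟨x, hxmem, hxmin⟩ :=
    (isCompact_closedBall (0 : EuclideanSpace ℝ (Fin n)) R).exists_isMinOn ⟨0, h0mem⟩
      hhcont.continuousOn
  have hglobal : ∀ z, h x ≤ h z := by
    intro z
    by_cases hzb : z ∈ Metric.closedBall (0 : EuclideanSpace ℝ (Fin n)) R
    · exact hxmin hzb
    · have hzn : ‖z‖ > R := by
        simpa [Metric.mem_closedBall, dist_zero_right, not_le] using hzb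
      have hA := hlb z hzn
      have hB := isMinOn_iff.mp hxmin 0 h0mem
      linarith
  have hbound : ∀ z, (inner ℝ p z : ℝ) - f z ≤ (inner ℝ p x : ℝ) - f x := by
    intro z
    have := hglobal z
    simp only [hh] at this
    linarith
  refine ⟨x, ?_, ?_, hbound⟩
  · intro z
    have h1 := hglobal z
    simp only [hh] at h1
    have h2 : (inner ℝ p (z - x) : ℝ) = inner ℝ p z - inner ℝ p x := inner_sub_right _ _ _
    linarith
  · have hgr : IsGreatest {r : ℝ | ∃ y, r = (inner ℝ p y : ℝ) - f y} ((inner ℝ p x : ℝ) - f x) := by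
      constructor
      · exact ⟨x, rfl⟩
      · rintro r ⟨z, rfl⟩
        exact hbound z
    exact hgr.csSup_eq

lemma grad_eq_argmax {n : ℕ} (f : EuclideanSpace ℝ (Fin n) → ℝ)
    (g : EuclideanSpace ℝ (Fin n) → EuclideanSpace ℝ (Fin n))
    (hg : ∀ p, HasGradientAt (fenchel f) (g p) p)
    (p x : EuclideanSpace ℝ (Fin n))
    (hx : fenchel f p = (inner ℝ p x : ℝ) - f x)
    (hub : ∀ q, (inner ℝ q x : ℝ) - f x ≤ fenchel f q) : g p = x := by
  set φ : EuclideanSpace ℝ (Fin n) → ℝ := fun q => fenchel f q - inner ℝ x q with hφ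
  have hmin : ∀ q, φ p ≤ φ q := by
    intro q
    have h1 := hub q
    have h2 : (inner ℝ q x : ℝ) = inner ℝ x q := real_inner_comm _ _
    have h3 : (inner ℝ p x : ℝ) = inner ℝ x p := real_inner_comm _ _
    simp only [hφ]
    rw [hx]
    linarith
  have hder : HasFDerivAt φ
      (InnerProductSpace.toDual ℝ (EuclideanSpace ℝ (Fin n)) (g p)
        - InnerProductSpace.toDual ℝ (EuclideanSpace ℝ (Fin n)) x) p := by
    have h1 : HasFDerivAt (fenchel f)
        (InnerProductSpace.toDual ℝ (EuclideanSpace ℝ (Fin n)) (g p)) p :=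
      hasGradientAt_iff_hasFDerivAt.mp (hg p)
    have h2 : HasFDerivAt (fun q : EuclideanSpace ℝ (Fin n) => (inner ℝ x q : ℝ))
        (InnerProductSpace.toDual ℝ (EuclideanSpace ℝ (Fin n)) x) p := by
      have := (InnerProductSpace.toDual ℝ (EuclideanSpace ℝ (Fin n)) x).hasFDerivAt (x := p)
      convert this using 1
      funext q
      simp [InnerProductSpace.toDual_apply_apply]
    exact h1.sub h2
  have hloc : IsLocalMin φ p := Filter.Eventually.of_forall hmin
  have hz := hloc.hasFDerivAt_eq_zero hder
  rw [sub_eq_zero] at hz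
  exact (InnerProductSpace.toDual ℝ (EuclideanSpace ℝ (Fin n))).injective hz

/-- Relating the Bregman distance to the primal optimum and the dual
suboptimality: with `d = Aᵀ y` and `x = ∇f*(d)` one has `d ∈ ∂f(x)` and
`D_f^d(x, x̂) = Ψ(y) - Ψ̂` where `Ψ(y) = f*(Aᵀy) - ⟨b, y⟩`. -/
theorem bregman_eq_dual_subopt {n m : ℕ}
    (f : EuclideanSpace ℝ (Fin n) → ℝ) (σ : ℝ) (hσ : 0 < σ)
    (hconv : ConvexOn ℝ Set.univ f)
    (hsc : ∀ x y xs, SubgradAt f x xs →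
      f y ≥ f x + (inner ℝ xs (y - x) : ℝ) + σ / 2 * ‖y - x‖ ^ 2)
    (g : EuclideanSpace ℝ (Fin n) → EuclideanSpace ℝ (Fin n))
    (hg : ∀ p, HasGradientAt (fenchel f) (g p) p)
    (A : EuclideanSpace ℝ (Fin n) →L[ℝ] EuclideanSpace ℝ (Fin m))
    (b : EuclideanSpace ℝ (Fin m))
    (Ψ : EuclideanSpace ℝ (Fin m) → ℝ)
    (hΨ : ∀ y, Ψ y = fenchel f (ContinuousLinearMap.adjoint A y) - (inner ℝ b y : ℝ))
    (xhat : EuclideanSpace ℝ (Fin n)) (hfeas : A xhat = b)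
    (hopt : ∀ x, A x = b → f xhat ≤ f x)
    (huniq : ∀ x, A x = b → f x = f xhat → x = xhat)
    (yhat : EuclideanSpace ℝ (Fin m)) (hdual : ∀ y, Ψ yhat ≤ Ψ y) :
    ∀ y : EuclideanSpace ℝ (Fin m),
      SubgradAt f (g (ContinuousLinearMap.adjoint A y))
        (ContinuousLinearMap.adjoint A y) ∧
      (f xhat - f (g (ContinuousLinearMap.adjoint A y)) -
        (inner ℝ (ContinuousLinearMap.adjoint A y)
          (xhat - g (ContinuousLinearMap.adjoint A y)) : ℝ)) = Ψ y - Ψ yhat := by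
  -- for every p, g p is the argmax of the Fenchel conjugate
  have hAM : ∀ p : EuclideanSpace ℝ (Fin n), SubgradAt f (g p) p ∧
      fenchel f p = (inner ℝ p (g p) : ℝ) - f (g p) := by
    intro p
    obtain ⟨x, h1, h2, h3⟩ := fenchel_argmax f σ hσ hconv hsc p
    have hub : ∀ q, (inner ℝ q x : ℝ) - f x ≤ fenchel f q := by
      intro q
      obtain ⟨x', _, h2', h3'⟩ := fenchel_argmax f σ hσ hconv hsc q
      rw [h2']
      exact h3' x
    have hgx : g p = x := grad_eq_argmax f g hg p x h2 hub
    rw [← hgx] at h1 h2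
    exact ⟨h1, h2⟩
  -- strong duality: Ψ yhat = - f xhat
  set phat := ContinuousLinearMap.adjoint A yhat with hphat
  obtain ⟨hsub_t, heq_t⟩ := hAM phat
  have hderΨ : HasFDerivAt Ψ
      ((InnerProductSpace.toDual ℝ (EuclideanSpace ℝ (Fin n)) (g phat)).comp
          (ContinuousLinearMap.adjoint A)
        - InnerProductSpace.toDual ℝ (EuclideanSpace ℝ (Fin m)) b) yhat := by
    have hΨfun : Ψ = fun y => fenchel f (ContinuousLinearMap.adjoint A y) - (inner ℝ b y : ℝ) :=
      funext hΨ
    rw [hΨfun]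
    have h1 : HasFDerivAt (fun y => fenchel f (ContinuousLinearMap.adjoint A y))
        ((InnerProductSpace.toDual ℝ (EuclideanSpace ℝ (Fin n)) (g phat)).comp
          (ContinuousLinearMap.adjoint A)) yhat := by
      have hA := (ContinuousLinearMap.adjoint A).hasFDerivAt (x := yhat)
      have hF : HasFDerivAt (fenchel f)
          (InnerProductSpace.toDual ℝ (EuclideanSpace ℝ (Fin n)) (g phat)) phat :=
        hasGradientAt_iff_hasFDerivAt.mp (hg phat)
      exact hF.comp yhat hA
    have h2 : HasFDerivAt (fun y : EuclideanSpace ℝ (Fin m) => (inner ℝ b y : ℝ))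
        (InnerProductSpace.toDual ℝ (EuclideanSpace ℝ (Fin m)) b) yhat := by
      have := (InnerProductSpace.toDual ℝ (EuclideanSpace ℝ (Fin m)) b).hasFDerivAt (x := yhat)
      convert this using 1
      funext q
      simp [InnerProductSpace.toDual_apply_apply]
    exact h1.sub h2
  have hlocΨ : IsLocalMin Ψ yhat := Filter.Eventually.of_forall hdual
  have hzero := hlocΨ.hasFDerivAt_eq_zero hderΨ
  have hfeas_t : A (g phat) = b := by
    have happ : ∀ u, (inner ℝ (A (g phat) - b) u : ℝ) = 0 := by
      intro u
      have h1 := ContinuousLinearMap.ext_iff.mp hzero u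
      simp only [ContinuousLinearMap.sub_apply, ContinuousLinearMap.comp_apply,
        InnerProductSpace.toDual_apply_apply, ContinuousLinearMap.zero_apply] at h1
      have h2 : (inner ℝ (g phat) (ContinuousLinearMap.adjoint A u) : ℝ) = inner ℝ (A (g phat)) u :=
        ContinuousLinearMap.adjoint_inner_right _ _ _
      rw [inner_sub_left]
      rw [h2] at h1
      linarith
    have := happ (A (g phat) - b)
    rw [inner_self_eq_zero] at this
    exact sub_eq_zero.mp this
  have hft : f (g phat) = f xhat := by
    have h1 : (inner ℝ phat (xhat - g phat) : ℝ) = 0 := by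
      rw [hphat, ContinuousLinearMap.adjoint_inner_left, map_sub, hfeas, hfeas_t, sub_self,
        inner_zero_right]
    have h2 := hsub_t xhat
    rw [h1] at h2
    have h3 := hopt (g phat) hfeas_t
    linarith
  have hΨhat : Ψ yhat = - f xhat := by
    rw [hΨ yhat, heq_t]
    have h1 : (inner ℝ phat (g phat) : ℝ) = inner ℝ b yhat := by
      rw [hphat, ContinuousLinearMap.adjoint_inner_left, hfeas_t]
      exact real_inner_comm _ _
    rw [h1, hft]
    ring
  -- main computation
  intro y
  obtain ⟨hsub, heq⟩ := hAM (ContinuousLinearMap.adjoint A y)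
  refine ⟨hsub, ?_⟩
  have hpx : (inner ℝ (ContinuousLinearMap.adjoint A y) xhat : ℝ) = inner ℝ b y := by
    rw [ContinuousLinearMap.adjoint_inner_left, hfeas]
    exact real_inner_comm _ _
  have hinn : (inner ℝ (ContinuousLinearMap.adjoint A y)
      (xhat - g (ContinuousLinearMap.adjoint A y)) : ℝ) =
      inner ℝ (ContinuousLinearMap.adjoint A y) xhat
        - inner ℝ (ContinuousLinearMap.adjoint A y) (g (ContinuousLinearMap.adjoint A y)) :=
    inner_sub_right _ _ _
  rw [hinn, hpx, hΨ y, hΨhat, heq]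
  ring
end

section
/- Let Ψ have block-coordinate Lipschitz continuous gradient with constants L_i > 0 for blocks i ∈ [M], satisfy the PL inequality Ψ(y) − Ψ̂ ≤ γ‖∇Ψ(y)‖₂², and suppose the randomized block coordinate step y⁺ = y − (1/L_i)U_i∇_{(i)}Ψ(y) with block i chosen with probability p_i = L_i^α / Σ_j L_j^α (α ∈ [0,1]) satisfies Ψ(y⁺) ≤ Ψ(y) − (1/(2L_i))‖∇_{(i)}Ψ(y)‖₂². Then E[Ψ(y⁺) − Ψ̂ | y] ≤ (1 − 1/(2Mγ·L̄_α·L̄^{1−α}))(Ψ(y) − Ψ̂), where L̄_α = (1/M)Σ_j L_j^α and L̄ = L̄₁ ≥ max_i L_i. -/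
open scoped BigOperators

/-- Expected linear decrease of the randomized block coordinate descent step
under the PL inequality: with blocks `i ∈ [M]`, block Lipschitz constants
`L i > 0`, sampling probabilities `p i = L i ^ α / ∑ j, L j ^ α`,
block gradient squared norms `N i` (so `‖∇Ψ(y)‖² = ∑ i, N i`), per-block
decrease `Ψ⁺ i ≤ Ψ y - (1/(2 L i)) N i`, and PL inequality
`Ψ y - Ψ̂ ≤ γ ∑ i, N i`, one gets
`E[Ψ⁺ - Ψ̂] ≤ (1 - 1/(2 M γ L̄_α L̄^{1-α}))(Ψ y - Ψ̂)` where
`L̄_α = (1/M) ∑ j, L j ^ α` and `L̄ = L̄₁ ≥ max_i L i`. -/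
theorem block_cd_expected_linear_decrease (M : ℕ) (hM : 1 ≤ M)
    (L : Fin M → ℝ) (hL : ∀ i, 0 < L i)
    (α : ℝ) (hα0 : 0 ≤ α) (hα1 : α ≤ 1)
    (N : Fin M → ℝ) (hN : ∀ i, 0 ≤ N i)
    (Ψy Ψhat : ℝ) (hmin : Ψhat ≤ Ψy)
    (γ : ℝ) (hγ : 0 < γ)
    (hPL : Ψy - Ψhat ≤ γ * ∑ i, N i)
    (Ψplus : Fin M → ℝ) (hmin' : ∀ i, Ψhat ≤ Ψplus i)
    (hstep : ∀ i, Ψplus i ≤ Ψy - (1 / (2 * L i)) * N i)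
    (p : Fin M → ℝ) (hp : ∀ i, p i = Real.rpow (L i) α / ∑ j, Real.rpow (L j) α)
    (Lbarα Lbar : ℝ)
    (hLbarα : Lbarα = (1 / (M : ℝ)) * ∑ j, Real.rpow (L j) α)
    (hLbar : Lbar = (1 / (M : ℝ)) * ∑ j, L j)
    (hmax : ∀ i, L i ≤ Lbar) :
    ∑ i, p i * (Ψplus i - Ψhat) ≤
      (1 - 1 / (2 * (M : ℝ) * γ * Lbarα * Real.rpow Lbar (1 - α))) *
        (Ψy - Ψhat) := by
  simp only [Real.rpow_eq_pow] at hp hLbarα ⊢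
  have hne : Nonempty (Fin M) := Fin.pos_iff_nonempty.mp hM
  have hMpos : (0 : ℝ) < (M : ℝ) := by exact_mod_cast hM
  set S : ℝ := ∑ j, (L j) ^ α with hSdef
  have hSpos : 0 < S :=
    Finset.sum_pos (fun j _ => Real.rpow_pos_of_pos (hL j) α) Finset.univ_nonempty
  have hLbarpos : 0 < Lbar := by
    rw [hLbar]
    exact mul_pos (by positivity) (Finset.sum_pos (fun j _ => hL j) Finset.univ_nonempty)
  have hLbarαpos : 0 < Lbarα := by rw [hLbarα]; positivity
  have hBpos : (0:ℝ) < Lbar ^ (1 - α) := Real.rpow_pos_of_pos hLbarpos _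
  have hApos : (0:ℝ) < Lbar ^ (α - 1) := Real.rpow_pos_of_pos hLbarpos _
  have hppos : ∀ i, 0 < p i := fun i => by
    rw [hp]; exact div_pos (Real.rpow_pos_of_pos (hL i) α) hSpos
  have hpsum : ∑ i, p i = 1 := by
    simp only [hp]
    rw [← Finset.sum_div, div_self hSpos.ne']
  have hkey : ∀ i, Lbar ^ (α - 1) / (2 * S) * N i ≤ p i * ((1 / (2 * L i)) * N i) := by
    intro i
    have h1 : p i * (1 / (2 * L i)) = (L i) ^ (α - 1) / (2 * S) := by
      rw [hp, Real.rpow_sub (hL i), Real.rpow_one]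
      field_simp
    rw [← mul_assoc, h1]
    have h2 : Lbar ^ (α - 1) ≤ (L i) ^ (α - 1) :=
      Real.rpow_le_rpow_of_nonpos (hL i) (hmax i) (by linarith)
    exact mul_le_mul_of_nonneg_right
      (div_le_div_of_nonneg_right h2 (by positivity)) (hN i)
  set c : ℝ := 1 / (2 * (M : ℝ) * γ * Lbarα * Lbar ^ (1 - α)) with hc
  have hconst : Lbar ^ (α - 1) / (2 * S) * ((Ψy - Ψhat) / γ) = c * (Ψy - Ψhat) := by
    have hS' : S = (M : ℝ) * Lbarα := by
      rw [hLbarα]; field_simp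
    have hinv : Lbar ^ (α - 1) * Lbar ^ (1 - α) = 1 := by
      rw [← Real.rpow_add hLbarpos]; norm_num
    have hA : Lbar ^ (α - 1) = (Lbar ^ (1 - α))⁻¹ :=
      eq_inv_of_mul_eq_one_left (by linear_combination hinv)
    rw [hc, hS', hA]
    field_simp
  have hstep2 : ∑ i, p i * (Ψplus i - Ψhat) ≤
      ∑ i, p i * ((Ψy - Ψhat) - (1 / (2 * L i)) * N i) := by
    refine Finset.sum_le_sum fun i _ => mul_le_mul_of_nonneg_left ?_ (hppos i).le
    have := hstep i; linarith
  have hsplit : ∑ i, p i * ((Ψy - Ψhat) - (1 / (2 * L i)) * N i) =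
      (Ψy - Ψhat) - ∑ i, p i * ((1 / (2 * L i)) * N i) := by
    simp only [mul_sub, Finset.sum_sub_distrib, ← Finset.sum_mul, hpsum, one_mul]
  have hlower : c * (Ψy - Ψhat) ≤ ∑ i, p i * ((1 / (2 * L i)) * N i) := by
    calc c * (Ψy - Ψhat) = Lbar ^ (α - 1) / (2 * S) * ((Ψy - Ψhat) / γ) :=
          hconst.symm
      _ ≤ Lbar ^ (α - 1) / (2 * S) * ∑ i, N i := by
          refine mul_le_mul_of_nonneg_left ?_ (by positivity)
          rw [div_le_iff₀ hγ]; linarith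
      _ = ∑ i, Lbar ^ (α - 1) / (2 * S) * N i := by rw [Finset.mul_sum]
      _ ≤ _ := Finset.sum_le_sum fun i _ => hkey i
  calc ∑ i, p i * (Ψplus i - Ψhat)
      ≤ (Ψy - Ψhat) - ∑ i, p i * ((1 / (2 * L i)) * N i) := by
        rw [← hsplit]; exact hstep2
    _ ≤ (Ψy - Ψhat) - c * (Ψy - Ψhat) := by linarith
    _ = (1 - c) * (Ψy - Ψhat) := by ring
end

section
/- Let θ_k be the sequence with θ₀ = 1/M (M ≥ 1 an integer) and θ_{k+1} = (√(θ_k⁴ + 4θ_k²) − θ_k²)/2. Then for all k ≥ 1, θ_{k−1}²/θ₀² ≤ 4M²/(k − 1 + 2M)². -/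
/-- For the Tseng sequence with `θ₀ = 1/M`, for all `k ≥ 1`,
`θ_{k-1}²/θ₀² ≤ 4M²/(k - 1 + 2M)²`. -/
theorem tseng_seq_ratio_bound (M : ℕ) (hM : 1 ≤ M)
    (θ : ℕ → ℝ) (h0 : θ 0 = 1 / (M : ℝ))
    (hrec : ∀ k, θ (k + 1) =
      (Real.sqrt ((θ k) ^ 4 + 4 * (θ k) ^ 2) - (θ k) ^ 2) / 2) :
    ∀ k : ℕ, 1 ≤ k →
      (θ (k - 1)) ^ 2 / (θ 0) ^ 2 ≤
        4 * (M : ℝ) ^ 2 / ((k : ℝ) - 1 + 2 * (M : ℝ)) ^ 2 := by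
  have hMpos : (0 : ℝ) < M := by exact_mod_cast hM
  -- positivity of the sequence
  have hpos : ∀ k, 0 < θ k := by
    intro k
    induction k with
    | zero => rw [h0]; positivity
    | succ n ih =>
      rw [hrec n]
      have hlt : (θ n ^ 2) ^ 2 < θ n ^ 4 + 4 * θ n ^ 2 := by nlinarith
      have := Real.lt_sqrt (by positivity : (0:ℝ) ≤ θ n ^ 2) |>.mpr hlt
      linarith
  -- quadratic relation
  have hquad : ∀ k, (θ (k+1)) ^ 2 + (θ k) ^ 2 * θ (k+1) = (θ k) ^ 2 := by
    intro k
    have h := hrec k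
    have hs : 2 * θ (k+1) + (θ k) ^ 2 = Real.sqrt ((θ k) ^ 4 + 4 * (θ k) ^ 2) := by
      rw [h]; ring
    have hsq : (2 * θ (k+1) + (θ k) ^ 2) ^ 2 = (θ k) ^ 4 + 4 * (θ k) ^ 2 := by
      rw [hs]; exact Real.sq_sqrt (by positivity)
    nlinarith [hsq]
  -- 1/θ (k+1) ≥ 1/θ k + 1/2
  have hstep : ∀ k, 1 / θ k + 1 / 2 ≤ 1 / θ (k+1) := by
    intro k
    have ha := hpos k
    have hb := hpos (k+1)
    have hq := hquad k
    have hba : θ (k+1) < θ k := by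
      nlinarith [mul_pos ha ha, mul_pos (mul_pos ha ha) ha, mul_pos ha hb, mul_pos hb hb]
    rw [div_add_div _ _ (ne_of_gt ha) (by norm_num), div_le_div_iff₀ (by positivity) hb]
    nlinarith [mul_pos ha hb, mul_pos (mul_pos ha ha) hb]
  -- 1/θ k ≥ M + k/2
  have hinv : ∀ k, (M : ℝ) + k / 2 ≤ 1 / θ k := by
    intro k
    induction k with
    | zero => simp [h0]
    | succ n ih =>
      have := hstep n
      push_cast
      linarith
  -- θ k ≤ 2/(k + 2M)
  have hbound : ∀ k : ℕ, θ k ≤ 2 / ((k : ℝ) + 2 * M) := by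
    intro k
    have h1 := hinv k
    have hk : (0:ℝ) < (k : ℝ) + 2 * M := by positivity
    have hp := hpos k
    rw [le_div_iff₀ hk]
    have h2 : θ k * ((M : ℝ) + k / 2) ≤ 1 := by
      calc θ k * ((M:ℝ) + k / 2) ≤ θ k * (1 / θ k) :=
        mul_le_mul_of_nonneg_left h1 (le_of_lt hp)
      _ = 1 := by field_simp
    nlinarith [h2]
  intro k hk
  obtain ⟨n, rfl⟩ := Nat.exists_eq_add_of_le hk
  have hn : 1 + n - 1 = n := by omega
  rw [hn, h0]
  have hkcast : ((1 + n : ℕ) : ℝ) - 1 + 2 * M = (n : ℝ) + 2 * M := by push_cast; ring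
  rw [hkcast]
  have hden : (0:ℝ) < (n : ℝ) + 2 * M := by positivity
  have hb := hbound n
  have hp := hpos n
  have hsq : (θ n) ^ 2 ≤ (2 / ((n : ℝ) + 2 * M)) ^ 2 :=
    pow_le_pow_left₀ (le_of_lt hp) hb 2
  have h02 : (1 / (M : ℝ)) ^ 2 = 1 / (M : ℝ) ^ 2 := by field_simp
  rw [h02]
  calc (θ n) ^ 2 / (1 / (M:ℝ)^2) = (M:ℝ)^2 * (θ n)^2 := by field_simp
  _ ≤ (M:ℝ)^2 * (2 / ((n : ℝ) + 2 * M)) ^ 2 := by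
      apply mul_le_mul_of_nonneg_left hsq (by positivity)
  _ = 4 * (M:ℝ)^2 / ((n : ℝ) + 2 * M) ^ 2 := by
      rw [div_pow]; ring
end
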